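/- Let (U, A) be a left bialgebroid which is left Hopf and M a stable anti Yetter-Drinfel'd contramodule over U with contraaction γ. For each q, let θ: Hom_U(U^{⊗_{A^op}(q+1)}, M) ≅ Hom_{A^op}(U^{⊗_{A^op} q}, M) be g ↦ g(1, ·), let η: Hom_U(U ⊗_A U^{⊗_{A^op} q}, M) ≅ Hom_U(U^{⊗_{A^op}(q+1)}, M) be η(f)(v, u¹, …, u^q) = f(v₍₁₎ ⊗ (v₍₂₎u¹, u², …, u^q)), and let χ: Hom_U(U^{⊗_{A^op} q} ⊗_A U, M) ≅ Hom_U(U^{⊗_{A^op}(q+1)}, M) be χ(f)(u¹, …, u^q, v) = f((u¹₍₁₎, …, u^q₍₁₎) ⊗ u¹₍₂₎⋯u^q₍₂₎ v). Then the composite θ ∘ χ ∘ tr ∘ η⁻¹ ∘ θ⁻¹, where tr: Hom_U(U ⊗_A U^{⊗_{A^op} q}, M) ≅ Hom_U(U^{⊗_{A^op} q} ⊗_A U, M) is the trace isomorphism (tr f)(p ⊗ n) = γ(f(n ⊗ − p)), equals the cocyclic operator τ on C^q(U,M) = Hom_{A^op}(U^{⊗_{A^op} q}, M) given by (τ f)(u¹,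 …, u^q) = γ(((u¹₍₂₎ ⋯ u^{q-1}₍₂₎ u^q) · f)(−, u¹₍₁₎, …, u^{q-1}₍₁₎)), where (u · f)(v,…) = u₊ f(u₋ v, …). -/

import Mathlib

open scoped TensorProduct
open TensorProduct

noncomputable section

variable (k A U : Type) [CommRing k] [Ring A] [Ring U] [Algebra k A] [Algebra k U]

/-- The `k`-submodule of `N ⊗[k] M` of relations defining the `A`-module tensor
product `N ⊗_A M` of two left `U`-modules, where the right `A`-action on `N` is
`n ◃ a := t a • n` and the left `A`-action on `M` is `a ▹ m := s a • m`
(the `A`-bimodule structure `a ▹ m ◃ b = s a • t b • m` induced by the forgetful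
functor along the source and target maps `s`, `t`). -/
def relA (s t : A → U) (N M : Type) [AddCommGroup N] [Module k N] [Module U N]
    [AddCommGroup M] [Module k M] [Module U M] : Submodule k (N ⊗[k] M) :=
  Submodule.span k
    {z | ∃ (a : A) (n : N) (m : M), z = (t a • n) ⊗ₜ[k] m - n ⊗ₜ[k] (s a • m)}

/-- Relations defining `U ⊗_{Aᵒᵖ} U` (the source of the Hopf–Galois map `α_ℓ`):
`(u * t a) ⊗ v - u ⊗ (t a * v)`. -/
def relOp (t : A → U) : Submodule k (U ⊗[k] U) :=
  Submodule.span k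
    {z | ∃ (a : A) (u v : U), z = (u * t a) ⊗ₜ[k] v - u ⊗ₜ[k] (t a * v)}

/-- Relations defining the triple tensor product `U ⊗_A U ⊗_A U` inside
`U ⊗[k] (U ⊗[k] U)`. -/
def rel3 (s t : A → U) : Submodule k (U ⊗[k] (U ⊗[k] U)) :=
  Submodule.span k
    ({z | ∃ (a : A) (u v w : U),
        z = (t a * u) ⊗ₜ[k] (v ⊗ₜ[k] w) - u ⊗ₜ[k] ((s a * v) ⊗ₜ[k] w)} ∪
     {z | ∃ (a : A) (u v w : U),
        z = u ⊗ₜ[k] ((t a * v) ⊗ₜ[k] w) - u ⊗ₜ[k] (v ⊗ₜ[k] (s a * w))})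

/-- A left bialgebroid `(U, A)` over a commutative ring `k`, presented with a
set-theoretic lift `comul : U → U ⊗[k] U` of the coproduct `Δ : U → U ⊗_A U`;
all structure equations involving `Δ` are stated modulo the relation submodule
`relA`, resp. on arbitrary finite decompositions into elementary tensors
(= Sweedler components). -/
structure LeftBialgebroid : Type 1 where
  /-- the source map, an algebra map `A → U` -/
  s : A →ₐ[k] U
  /-- the target map, an algebra anti-homomorphism `A → U` -/
  t : A →ₗ[k] U
  t_one : t 1 = 1
  t_mul : ∀ a b : A, t (a * b) = t b * t a
  st_comm : ∀ a b : A, s a * t b = t b * s a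
  /-- the counit -/
  counit : U →ₗ[k] A
  /-- a lift of the coproduct -/
  comul : U → U ⊗[k] U
  comul_add : ∀ u v : U, comul (u + v) - comul u - comul v ∈ relA k A U s t U U
  comul_ksmul : ∀ (c : k) (u : U), comul (c • u) - c • comul u ∈ relA k A U s t U U
  comul_one : comul 1 - (1 : U) ⊗ₜ[k] (1 : U) ∈ relA k A U s t U U
  comul_s : ∀ a : A, comul (s a) - (s a) ⊗ₜ[k] (1 : U) ∈ relA k A U s t U U
  comul_t : ∀ a : A, comul (t a) - (1 : U) ⊗ₜ[k] (t a) ∈ relA k A U s t U U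
  comul_mul : ∀ u v : U, comul (u * v) - comul u * comul v ∈ relA k A U s t U U
  /-- The coproduct takes values in the Takeuchi product `U ×_A U`. -/
  takeuchi : ∀ (u : U) (a : A),
    TensorProduct.map (LinearMap.mulRight k (t a)) LinearMap.id (comul u) -
      TensorProduct.map LinearMap.id (LinearMap.mulRight k (s a)) (comul u)
      ∈ relA k A U s t U U
  counit_one : counit 1 = 1
  counit_s : ∀ a : A, counit (s a) = a
  counit_t : ∀ a : A, counit (t a) = a
  counit_sl : ∀ (a : A) (u : U), counit (s a * u) = a * counit u
  counit_tl : ∀ (a : A) (u : U), counit (t a * u) = counit u * a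
  /-- left counitality: `s (ε u₍₁₎) u₍₂₎ = u` -/
  counit_comul_left : ∀ (u : U) {κ : Type} [Fintype κ] (x y : κ → U),
    comul u - ∑ j, x j ⊗ₜ[k] y j ∈ relA k A U s t U U →
      ∑ j, s (counit (x j)) * y j = u
  /-- right counitality: `t (ε u₍₂₎) u₍₁₎ = u` -/
  counit_comul_right : ∀ (u : U) {κ : Type} [Fintype κ] (x y : κ → U),
    comul u - ∑ j, x j ⊗ₜ[k] y j ∈ relA k A U s t U U →
      ∑ j, t (counit (y j)) * x j = u
  /-- coassociativity: `u₍₁₎₍₁₎ ⊗ u₍₁₎₍₂₎ ⊗ u₍₂₎ = u₍₁₎ ⊗ u₍₂₎₍₁₎ ⊗ u₍₂₎₍₂₎` -/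
  coassoc : ∀ (u : U) {κ : Type} [Fintype κ] (x y : κ → U)
      {κ' : Type} [Fintype κ'] (x₁ y₁ : κ → κ' → U) (x₂ y₂ : κ → κ' → U),
    comul u - ∑ j, x j ⊗ₜ[k] y j ∈ relA k A U s t U U →
    (∀ j, comul (x j) - ∑ l, x₁ j l ⊗ₜ[k] y₁ j l ∈ relA k A U s t U U) →
    (∀ j, comul (y j) - ∑ l, x₂ j l ⊗ₜ[k] y₂ j l ∈ relA k A U s t U U) →
    (∑ j, ∑ l, x₁ j l ⊗ₜ[k] (y₁ j l ⊗ₜ[k] y j)) -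
      (∑ j, ∑ l, x j ⊗ₜ[k] (x₂ j l ⊗ₜ[k] y₂ j l)) ∈ rel3 k A U s t

/-- A left Hopf structure on a left bialgebroid: the translation map
`u ↦ u₊ ⊗ u₋` (a set-theoretic lift of `α_ℓ⁻¹(u ⊗ 1)`), linear modulo the
`⊗_{Aᵒᵖ}`-relations and satisfying the two identities characterizing the
inverse of the Hopf-Galois map `α_ℓ : u ⊗ v ↦ u₍₁₎ ⊗ u₍₂₎v`, namely
`u₊₍₁₎ ⊗ u₊₍₂₎ u₋ = u ⊗ 1` in `U ⊗_A U` and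
`u₍₁₎₊ ⊗ u₍₁₎₋ u₍₂₎ = u ⊗ 1` in `U ⊗_{Aᵒᵖ} U`; this data is equivalent to the
bijectivity of `α_ℓ`, i.e. to `(U, A)` being a left Hopf algebroid. -/
structure LeftHopf (lb : LeftBialgebroid k A U) : Type where
  pinv : U → U ⊗[k] U
  pinv_add : ∀ u v : U, pinv (u + v) - pinv u - pinv v ∈ relOp k A U lb.t
  pinv_ksmul : ∀ (c : k) (u : U), pinv (c • u) - c • pinv u ∈ relOp k A U lb.t
  sch2 : ∀ (u : U) {κ : Type} [Fintype κ] (x y : κ → U)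
      {κ' : Type} [Fintype κ'] (p q : κ → κ' → U),
    pinv u - ∑ j, x j ⊗ₜ[k] y j ∈ relOp k A U lb.t →
    (∀ j, lb.comul (x j) - ∑ l, p j l ⊗ₜ[k] q j l ∈ relA k A U lb.s lb.t U U) →
    (∑ j, ∑ l, p j l ⊗ₜ[k] (q j l * y j)) - u ⊗ₜ[k] (1 : U)
      ∈ relA k A U lb.s lb.t U U
  sch3 : ∀ (u : U) {κ : Type} [Fintype κ] (x y : κ → U)
      {κ' : Type} [Fintype κ'] (p q : κ → κ' → U),
    lb.comul u - ∑ j, x j ⊗ₜ[k] y j ∈ relA k A U lb.s lb.t U U →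
    (∀ j, pinv (x j) - ∑ l, p j l ⊗ₜ[k] q j l ∈ relOp k A U lb.t) →
    (∑ j, ∑ l, p j l ⊗ₜ[k] (q j l * y j)) - u ⊗ₜ[k] (1 : U)
      ∈ relOp k A U lb.t

variable {k A U}

/-- the `k`-linear map `u ↦ u • n` for a fixed element of a `U`-module -/
def actOn (N : Type) [AddCommGroup N] [Module k N] [Module U N]
    [IsScalarTower k U N] (n : N) : U →ₗ[k] N where
  toFun u := u • n
  map_add' u v := add_smul u v n
  map_smul' c u := smul_assoc c u n

/-- A `k`-linear map `g : N →ₗ[k] M` between left `U`-modules is right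
`A`-linear (for the right `A`-actions `n ◃ a = t a • n`). -/
def RightALin (lb : LeftBialgebroid k A U) {N M : Type}
    [AddCommGroup N] [Module k N] [Module U N]
    [AddCommGroup M] [Module k M] [Module U M]
    (g : N →ₗ[k] M) : Prop :=
  ∀ (a : A) (n : N), g (lb.t a • n) = lb.t a • g n

/-- `f` descends to `N ⊗_A P`. -/
def IsBalanced (lb : LeftBialgebroid k A U) {N P M : Type}
    [AddCommGroup N] [Module k N] [Module U N]
    [AddCommGroup P] [Module k P] [Module U P]
    [AddCommGroup M] [Module k M]
    (f : N ⊗[k] P →ₗ[k] M) : Prop :=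
  relA k A U lb.s lb.t N P ≤ LinearMap.ker f

/-- `f : N ⊗[k] P →ₗ[k] M` is equivariant for the diagonal (comultiplication)
`U`-action `u • (n ⊗ p) = u₍₁₎ n ⊗ u₍₂₎ p` on `N ⊗_A P` and the given `U`-action
on `M`. -/
def DiagEquiv (lb : LeftBialgebroid k A U) {N P M : Type}
    [AddCommGroup N] [Module k N] [Module U N]
    [AddCommGroup P] [Module k P] [Module U P]
    [AddCommGroup M] [Module k M] [Module U M]
    (f : N ⊗[k] P →ₗ[k] M) : Prop :=
  ∀ (u : U) (n : N) (p : P) {κ : Type} [Fintype κ] (x y : κ → U),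
    lb.comul u - ∑ j, x j ⊗ₜ[k] y j ∈ relA k A U lb.s lb.t U U →
      f (∑ j, (x j • n) ⊗ₜ[k] (y j • p)) = u • f (n ⊗ₜ[k] p)

variable (k A U)

/-- An anti Yetter-Drinfel'd contramodule over a left Hopf algebroid `(U, A)`:
a left `U`-module `M` which is simultaneously a right `U`-contramodule (with
contraaction `γ : Hom_{Aᵒᵖ}(U, M) → M`, defined on the right `A`-linear maps
`U → M`), such that the two induced `A`-bimodule structures coincide and
`u (γ(f)) = γ(u₊₍₂₎ f(u₋ · − · u₊₍₁₎))` holds. -/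
structure AYDContra (lb : LeftBialgebroid k A U) (lh : LeftHopf k A U lb)
    (M : Type) [AddCommGroup M] [Module k M] [Module U M] [IsScalarTower k U M] :
    Type 1 where
  /-- the contraaction, defined on right `A`-linear maps `U → M` -/
  γ : ∀ f : U →ₗ[k] M, RightALin lb f → M
  γ_add : ∀ (f g : U →ₗ[k] M) (hf : RightALin lb f) (hg : RightALin lb g)
    (hfg : RightALin lb (f + g)), γ (f + g) hfg = γ f hf + γ g hg
  γ_ksmul : ∀ (c : k) (f : U →ₗ[k] M) (hf : RightALin lb f)
    (hcf : RightALin lb (c • f)), γ (c • f) hcf = c • γ f hf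
  /-- right `A`-linearity of the contraaction: `γ(f(a ▹ −)) = γ(f) ◃ a` -/
  γ_ralin : ∀ (a : A) (f : U →ₗ[k] M) (hf : RightALin lb f)
    (h' : RightALin lb (f ∘ₗ LinearMap.mulLeft k (lb.s a))),
    γ (f ∘ₗ LinearMap.mulLeft k (lb.s a)) h' = lb.t a • γ f hf
  /-- contraassociativity: `γ̇(γ̈(g(· ⊗ ··))) = γ(g(−₍₁₎ ⊗ −₍₂₎))` -/
  γ_assoc : ∀ (g : U ⊗[k] U →ₗ[k] M),
    relA k A U lb.s lb.t U U ≤ LinearMap.ker g →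
    (∀ (a : A) (u v : U), g (u ⊗ₜ[k] (lb.t a * v)) = lb.t a • g (u ⊗ₜ[k] v)) →
    ∀ (h₁ h₂ : U →ₗ[k] M) (hh₁ : RightALin lb h₁) (hh₂ : RightALin lb h₂),
    (∀ u : U, ∀ hu : RightALin lb (g ∘ₗ TensorProduct.mk k U U u),
      h₁ u = γ (g ∘ₗ TensorProduct.mk k U U u) hu) →
    (∀ u : U, h₂ u = g (lb.comul u)) →
    γ h₁ hh₁ = γ h₂ hh₂
  /-- contraunitality: `γ(m ε(−)) = m` -/
  γ_counit : ∀ (m : M)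
    (h : RightALin lb ((actOn M m) ∘ₗ (lb.t ∘ₗ lb.counit))),
    γ ((actOn M m) ∘ₗ (lb.t ∘ₗ lb.counit)) h = m
  /-- the induced left `A`-action of the contramodule coincides with the one
  coming from the `U`-action via the source map \eqref{romaedintorni} -/
  bimod : ∀ (a : A) (m : M)
    (h : RightALin lb
      ((actOn M m) ∘ₗ (lb.t ∘ₗ (lb.counit ∘ₗ LinearMap.mulRight k (lb.s a))))),
    γ ((actOn M m) ∘ₗ (lb.t ∘ₗ (lb.counit ∘ₗ LinearMap.mulRight k (lb.s a)))) h =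
      lb.s a • m
  /-- the anti Yetter-Drinfel'd compatibility \eqref{nawas1}:
  `u (γ(f)) = γ(u₊₍₂₎ f(u₋ · − · u₊₍₁₎))` -/
  ayd : ∀ (u : U) (f : U →ₗ[k] M) (hf : RightALin lb f)
    {κ : Type} [Fintype κ] (x y : κ → U)
    {κ' : Type} [Fintype κ'] (p q : κ → κ' → U),
    lh.pinv u - ∑ j, x j ⊗ₜ[k] y j ∈ relOp k A U lb.t →
    (∀ j, lb.comul (x j) - ∑ l, p j l ⊗ₜ[k] q j l ∈ relA k A U lb.s lb.t U U) →
    ∀ (h : U →ₗ[k] M) (hh : RightALin lb h),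
    (∀ v : U, h v = ∑ j, ∑ l, q j l • f (y j * v * p j l)) →
    u • γ f hf = γ h hh

variable {k A U}

/-- Stability of an anti Yetter-Drinfel'd contramodule: `γ(− m) = m`. -/
def AYDContra.Stable {lb : LeftBialgebroid k A U} {lh : LeftHopf k A U lb}
    {M : Type} [AddCommGroup M] [Module k M] [Module U M] [IsScalarTower k U M]
    (C : AYDContra k A U lb lh M) : Prop :=
  ∀ (m : M) (h : RightALin lb (actOn (U := U) M m)), C.γ (actOn (U := U) M m) h = m

variable (k A U)

/-- A cochain in `C^q(U,M) = Hom_{Aᵒᵖ}(U^{⊗_{Aᵒᵖ} q}, M)`, presented as a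
function on tuples: `k`-multilinear, `⊗_{Aᵒᵖ}`-balanced between consecutive
slots, and right `A`-linear. -/
def IsCochain (lb : LeftBialgebroid k A U)
    (M : Type) [AddCommGroup M] [Module k M] [Module U M]
    (q : ℕ) (f : (Fin q → U) → M) : Prop :=
  (∀ (u : Fin q → U) (i : Fin q) (v v' : U),
    f (Function.update u i (v + v')) =
      f (Function.update u i v) + f (Function.update u i v')) ∧
  (∀ (u : Fin q → U) (i : Fin q) (c : k) (v : U),
    f (Function.update u i (c • v)) = c • f (Function.update u i v)) ∧
  (∀ (u : Fin q → U) (i : Fin (q - 1)) (a : A),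
    ∀ (j j' : Fin q), (j : ℕ) = i → (j' : ℕ) = i + 1 →
    f (Function.update u j (u j * lb.t a)) =
      f (Function.update u j' (lb.t a * u j'))) ∧
  (∀ (u : Fin q → U) (a : A) (j : Fin q), (j : ℕ) = 0 →
    f (Function.update u j (lb.t a * u j)) = lb.t a • f u)

variable {k A U}

/-!
Evaluating `θ χ tr η⁻¹ θ⁻¹ f` at `(u¹, …, uᵠ)` means evaluating `χ(tr η⁻¹ θ⁻¹ f)` at
`(1, u¹, …, uᵠ)`. Since `Δ(1) = 1 ⊗ 1`, this is `tr(η⁻¹ θ⁻¹ f)` at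
`(1, u¹₍₁₎, …, u^{q-1}₍₁₎) ⊗ X` with `X = u¹₍₂₎ ⋯ u^{q-1}₍₂₎ uᵠ`, that is, `γ` of
`w ↦ X₊ f(X₋ w, u¹₍₁₎, …, u^{q-1}₍₁₎)`, which is `(τ f)(u¹, …, uᵠ)`.

Two points need an argument. For `γ` to apply, each map `w ↦ v₊ f(v₋ w, …)` must be right
`A`-linear; this reduces to `v₊ ⊗ v₋ t(a) = t(a) v₊ ⊗ v₋` in `U ⊗_{Aᵒᵖ} U`, as both sides are
the image of `v ⊗ t(a)` under the inverse `x ⊗ y ↦ x₊ ⊗ x₋ y` of the Hopf–Galois map. And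
lifting `Δ(1) = 1 ⊗ 1` to the index set shared with the other Sweedler components introduces
zero components, which contribute nothing because a cochain vanishes on tuples with a zero entry.
-/

section Relations

variable {s t : A → U}
omit [Ring A] [Algebra k A]

theorem mul_mem_relA {z : U ⊗[k] U} (hz : z ∈ relA k A U s t U U) (w : U ⊗[k] U) :
    z * w ∈ relA k A U s t U U := by
  induction w using TensorProduct.induction_on with
  | zero => rw [mul_zero]; exact zero_mem _
  | add w w' hw hw' => rw [mul_add]; exact add_mem hw hw'
  | tmul p q =>
    refine (Submodule.span_le (p := (relA k A U s t U U).comap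
      (LinearMap.mulRight k (p ⊗ₜ[k] q)))).mpr ?_ hz
    rintro _ ⟨a, x, y, rfl⟩
    rw [SetLike.mem_coe, Submodule.mem_comap]
    exact Submodule.subset_span ⟨a, x * p, y * q, by simp [sub_mul, mul_assoc]⟩

theorem mul_one_tmul_mem_relOp {z : U ⊗[k] U} (hz : z ∈ relOp k A U t) (y : U) :
    z * ((1 : U) ⊗ₜ[k] y) ∈ relOp k A U t := by
  refine (Submodule.span_le (p := (relOp k A U t).comap
    (LinearMap.mulRight k ((1 : U) ⊗ₜ[k] y)))).mpr ?_ hz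
  rintro _ ⟨a, u, v, rfl⟩
  rw [SetLike.mem_coe, Submodule.mem_comap]
  exact Submodule.subset_span ⟨a, u, v * y, by simp [sub_mul, mul_assoc]⟩

theorem tmul_one_mul_mem_relOp {z : U ⊗[k] U} (hz : z ∈ relOp k A U t) (x : U) :
    (x ⊗ₜ[k] (1 : U)) * z ∈ relOp k A U t := by
  refine (Submodule.span_le (p := (relOp k A U t).comap
    (LinearMap.mulLeft k (x ⊗ₜ[k] (1 : U))))).mpr ?_ hz
  rintro _ ⟨a, u, v, rfl⟩
  rw [SetLike.mem_coe, Submodule.mem_comap]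
  exact Submodule.subset_span ⟨a, x * u, v, by simp [mul_sub, mul_assoc]⟩

end Relations

theorem exists_sum_tmul_eq_family {R M N : Type*} {κ : Type} [CommSemiring R] [AddCommMonoid M]
    [AddCommMonoid N] [Module R M] [Module R N] [Fintype κ] (z : κ → M ⊗[R] N) :
    ∃ (ι : Type) (_ : Fintype ι) (x : κ → ι → M) (y : κ → ι → N),
      ∀ j, z j = ∑ l, x j l ⊗ₜ[R] y j l := by
  classical
  choose L x y hxy using fun j => TensorProduct.exists_sum_tmul_eq (z j)
  refine ⟨Σ i, Fin (L i), inferInstance, fun j l => if j = l.1 then x l.1 l.2 else 0,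
    fun _ (l : Σ i, Fin (L i)) => y l.1 l.2, fun j => ?_⟩
  simp [Fintype.sum_sigma, TensorProduct.ite_tmul, hxy j]

section HopfAlgebroid

variable (lb : LeftBialgebroid k A U)

theorem one_tmul_t_mul_mem_relA (a : A) {z : U ⊗[k] U} (hz : z ∈ relA k A U lb.s lb.t U U) :
    ((1 : U) ⊗ₜ[k] lb.t a) * z ∈ relA k A U lb.s lb.t U U := by
  refine (Submodule.span_le (p := (relA k A U lb.s lb.t U U).comap
    (LinearMap.mulLeft k ((1 : U) ⊗ₜ[k] lb.t a)))).mpr ?_ hz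
  rintro _ ⟨b, x, y, rfl⟩
  rw [SetLike.mem_coe, Submodule.mem_comap]
  refine Submodule.subset_span ⟨b, x, lb.t a * y, ?_⟩
  simp [mul_sub, ← mul_assoc, lb.st_comm]

theorem comul_t_mul_sub_mem_relA (a : A) (x : U) :
    lb.comul (lb.t a * x) - ((1 : U) ⊗ₜ[k] lb.t a) * lb.comul x ∈ relA k A U lb.s lb.t U U := by
  have h := add_mem (lb.comul_mul (lb.t a) x) (mul_mem_relA (lb.comul_t a) (lb.comul x))
  rwa [sub_mul, sub_add_sub_cancel] at h

variable (lh : LeftHopf k A U lb)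

def galoisInv : U ⊗[k] U →ₗ[k] (U ⊗[k] U) ⧸ relOp k A U lb.t :=
  TensorProduct.lift <| LinearMap.mk₂ k
    (fun x y => (relOp k A U lb.t).mkQ (lh.pinv x * ((1 : U) ⊗ₜ[k] y)))
    (fun x x' y => by
      rw [← map_add, Submodule.mkQ_apply, Submodule.mkQ_apply, Submodule.Quotient.eq]
      simpa only [sub_mul, add_mul, sub_sub] using mul_one_tmul_mem_relOp (lh.pinv_add x x') y)
    (fun c x y => by
      rw [← map_smul, Submodule.mkQ_apply, Submodule.mkQ_apply, Submodule.Quotient.eq]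
      simpa only [sub_mul, smul_mul_assoc] using mul_one_tmul_mem_relOp (lh.pinv_ksmul c x) y)
    (fun x y y' => by
      rw [TensorProduct.tmul_add, mul_add, map_add])
    (fun c x y => by
      rw [TensorProduct.tmul_smul, mul_smul_comm, map_smul])

theorem galoisInv_tmul (x y : U) :
    galoisInv lb lh (x ⊗ₜ[k] y) = (relOp k A U lb.t).mkQ (lh.pinv x * ((1 : U) ⊗ₜ[k] y)) :=
  rfl

theorem galoisInv_mul_one_tmul {x : U} {z : U ⊗[k] U}
    (hz : lb.comul x - z ∈ relA k A U lb.s lb.t U U) (y : U) :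
    galoisInv lb lh (z * ((1 : U) ⊗ₜ[k] y)) = (relOp k A U lb.t).mkQ (x ⊗ₜ[k] y) := by
  obtain ⟨N, c, d, rfl⟩ := TensorProduct.exists_sum_tmul_eq z
  obtain ⟨ι, _, p, q, hpq⟩ := exists_sum_tmul_eq_family fun j => lh.pinv (c j)
  have h := mul_one_tmul_mem_relOp
    (lh.sch3 x c d p q hz fun j => by rw [hpq j, sub_self]; exact zero_mem _) y
  simp only [Finset.sum_mul, Algebra.TensorProduct.tmul_mul_tmul, mul_one, one_mul, sub_mul,
    mul_assoc] at h
  rw [Finset.sum_mul, map_sum]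
  simp only [Algebra.TensorProduct.tmul_mul_tmul, mul_one, galoisInv_tmul, hpq, Finset.sum_mul]
  rwa [← map_sum, Submodule.mkQ_apply, Submodule.mkQ_apply, Submodule.Quotient.eq]

theorem galoisInv_eq_zero_of_mem_relA {r : U ⊗[k] U} (hr : r ∈ relA k A U lb.s lb.t U U) :
    galoisInv lb lh r = 0 := by
  have h₁ := galoisInv_mul_one_tmul lb lh (x := 1) (z := lb.comul 1 - r) (by simpa using hr) 1
  have h₀ := galoisInv_mul_one_tmul lb lh (x := 1) (z := lb.comul 1) (by simp) 1
  rw [← Algebra.TensorProduct.one_def, mul_one] at h₀ h₁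
  rwa [map_sub, h₀, sub_eq_self] at h₁

theorem pinv_mul_one_tmul_t_sub_mem_relOp (v : U) (a : A) :
    lh.pinv v * ((1 : U) ⊗ₜ[k] lb.t a) - (lb.t a ⊗ₜ[k] (1 : U)) * lh.pinv v
      ∈ relOp k A U lb.t := by
  obtain ⟨N, x, y, hv⟩ := TensorProduct.exists_sum_tmul_eq (lh.pinv v)
  obtain ⟨ι, _, p, q, hpq⟩ := exists_sum_tmul_eq_family fun j => lb.comul (x j)
  set z : Fin N → U ⊗[k] U := fun j => ∑ l, p j l ⊗ₜ[k] q j l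
  have hz : ∀ j, lb.comul (x j) - z j ∈ relA k A U lb.s lb.t U U := fun j => by
    rw [hpq j, sub_self]; exact zero_mem _
  -- `S` represents `v₊₍₁₎ ⊗ v₊₍₂₎ v₋ = v ⊗ 1` in `U ⊗_A U`
  set S := ∑ j, z j * ((1 : U) ⊗ₜ[k] y j)
  have hS : S - v ⊗ₜ[k] (1 : U) ∈ relA k A U lb.s lb.t U U := by
    convert lh.sch2 v x y p q (by rw [hv, sub_self]; exact zero_mem _) hz using 2
    simp [S, z, Finset.sum_mul]
  have hleft : (relOp k A U lb.t).mkQ (lh.pinv v * ((1 : U) ⊗ₜ[k] lb.t a)) =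
      galoisInv lb lh (S * ((1 : U) ⊗ₜ[k] lb.t a)) := by
    simp only [S, Finset.sum_mul, mul_assoc, Algebra.TensorProduct.tmul_mul_tmul, map_sum,
      galoisInv_mul_one_tmul lb lh (hz _), hv, mul_one]
  have hright : (relOp k A U lb.t).mkQ ((lb.t a ⊗ₜ[k] (1 : U)) * lh.pinv v) =
      galoisInv lb lh (((1 : U) ⊗ₜ[k] lb.t a) * S) := by
    have hz' : ∀ j, lb.comul (lb.t a * x j) - ((1 : U) ⊗ₜ[k] lb.t a) * z j
        ∈ relA k A U lb.s lb.t U U := fun j => by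
      simpa [mul_sub] using add_mem (comul_t_mul_sub_mem_relA lb a (x j))
        (one_tmul_t_mul_mem_relA lb a (hz j))
    simp only [S, Finset.mul_sum, ← mul_assoc, map_sum, galoisInv_mul_one_tmul lb lh (hz' _), hv,
      Algebra.TensorProduct.tmul_mul_tmul, one_mul]
  rw [← Submodule.Quotient.eq, ← Submodule.mkQ_apply, ← Submodule.mkQ_apply, hleft, hright,
    ← sub_eq_zero, ← map_sub]
  apply galoisInv_eq_zero_of_mem_relA
  have h := sub_mem (mul_mem_relA hS ((1 : U) ⊗ₜ[k] lb.t a)) (one_tmul_t_mul_mem_relA lb a hS)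
  simpa [sub_mul, mul_sub] using h

theorem sum_pinv_t_comm {X : Type*} [AddCommGroup X] [Module k X] (Φ : U →ₗ[k] U →ₗ[k] X)
    (hΦ : ∀ b x y, Φ (x * lb.t b) y = Φ x (lb.t b * y)) {v : U} {κ : Type} [Fintype κ]
    {x y : κ → U} (hxy : lh.pinv v - ∑ j, x j ⊗ₜ[k] y j ∈ relOp k A U lb.t) (a : A) :
    ∑ j, Φ (x j) (y j * lb.t a) = ∑ j, Φ (lb.t a * x j) (y j) := by
  have hker : relOp k A U lb.t ≤ LinearMap.ker (TensorProduct.lift Φ) :=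
    Submodule.span_le.mpr <| by rintro _ ⟨b, p, q, rfl⟩; simp [hΦ]
  have hmem : (∑ j, x j ⊗ₜ[k] (y j * lb.t a)) - ∑ j, (lb.t a * x j) ⊗ₜ[k] y j
      ∈ relOp k A U lb.t := by
    have h := add_mem (sub_mem (pinv_mul_one_tmul_t_sub_mem_relOp lb lh v a)
      (mul_one_tmul_mem_relOp hxy (lb.t a))) (tmul_one_mul_mem_relOp hxy (lb.t a))
    convert h using 1
    simp only [sub_mul, mul_sub, Finset.sum_mul, Finset.mul_sum,
      Algebra.TensorProduct.tmul_mul_tmul, mul_one, one_mul]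
    abel
  simpa [sub_eq_zero] using hker hmem

end HopfAlgebroid

section Contraaction

variable {lb : LeftBialgebroid k A U} {lh : LeftHopf k A U lb}
  {M : Type} [AddCommGroup M] [Module k M] [Module U M] [IsScalarTower k U M]

variable (lb M) in
def rightALinSubmodule : Submodule k (U →ₗ[k] M) where
  carrier := {f | RightALin lb f}
  add_mem' hf hg a u := by
    rw [LinearMap.add_apply, LinearMap.add_apply, hf a u, hg a u, smul_add]
  zero_mem' a u := by simp
  smul_mem' c f hf a u := by rw [LinearMap.smul_apply, LinearMap.smul_apply, hf a u, smul_comm]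

def AYDContra.γₗ (C : AYDContra k A U lb lh M) : rightALinSubmodule lb M →ₗ[k] M where
  toFun f := C.γ f f.2
  map_add' f g := C.γ_add f g f.2 g.2 (f + g).2
  map_smul' c f := C.γ_ksmul c f f.2 (c • f).2

theorem AYDContra.γ_eq_zero (C : AYDContra k A U lb lh M) {h : U →ₗ[k] M}
    (hh : RightALin lb h) (h0 : h = 0) : C.γ h hh = 0 := by
  subst h0
  exact map_zero C.γₗ

theorem AYDContra.γ_eq_sum (C : AYDContra k A U lb lh M) {h : U →ₗ[k] M} (hh : RightALin lb h)
    {ι : Type} (S : Finset ι) {F : ι → U →ₗ[k] M} (hF : ∀ i, RightALin lb (F i))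
    (hsum : h = ∑ i ∈ S, F i) : C.γ h hh = ∑ i ∈ S, C.γ (F i) (hF i) := by
  have hcoe : ((∑ i ∈ S, ⟨F i, hF i⟩ : rightALinSubmodule lb M) : U →ₗ[k] M) = h := by
    simp [hsum]
  subst hcoe
  exact map_sum C.γₗ _ S

end Contraaction

namespace IsCochain

variable {lb : LeftBialgebroid k A U} {M : Type} [AddCommGroup M] [Module k M] [Module U M]

theorem apply_eq_zero {q : ℕ} {f : (Fin q → U) → M} (hf : IsCochain k A U lb M q f)
    {p : Fin q → U} {i : Fin q} (hp : p i = 0) : f p = 0 := by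
  have h := hf.2.1 p i 0 0
  rwa [zero_smul, zero_smul, ← hp, Function.update_eq_self] at h

variable {n : ℕ} {f : (Fin (n + 1) → U) → M} (hf : IsCochain k A U lb M (n + 1) f)
include hf

theorem update_zero_t_mul (p : Fin (n + 1) → U) (a : A) (z : U) :
    f (Function.update p 0 (lb.t a * z)) = lb.t a • f (Function.update p 0 z) := by
  simpa using hf.2.2.2 (Function.update p 0 z) a 0 rfl

variable [IsScalarTower k U M]

def slotPairing (p : Fin (n + 1) → U) : U →ₗ[k] U →ₗ[k] M :=
  LinearMap.mk₂ k (fun x z => x • f (Function.update p 0 z))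
    (fun x x' z => add_smul x x' _)
    (fun c x z => smul_assoc c x _)
    (fun x z z' => by rw [hf.1 p 0 z z', smul_add])
    (fun c x z => by rw [hf.2.1 p 0 c z, smul_comm])

/-- For `v₊ ⊗ v₋ = ∑ x ⊗ y`, the map `w ↦ v₊ f(v₋ w p⁰, p¹, …)`, i.e. `(v · f)(− p⁰, p¹, …)`. -/
def translateSlice (p : Fin (n + 1) → U) {ι : Type} [Fintype ι] (x y : ι → U) : U →ₗ[k] M :=
  ∑ l, hf.slotPairing p (x l) ∘ₗ LinearMap.mulLeft k (y l) ∘ₗ LinearMap.mulRight k (p 0)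

variable (p : Fin (n + 1) → U) {ι : Type} [Fintype ι] (x y : ι → U)

theorem translateSlice_apply (w : U) :
    hf.translateSlice p x y w = ∑ l, x l • f (Function.update p 0 (y l * (w * p 0))) := by
  simp [translateSlice, slotPairing]

theorem translateSlice_cons_one_apply (cs : Fin n → U) (w : U) :
    hf.translateSlice (Fin.cons 1 cs) x y w = ∑ l, x l • f (Fin.cons (y l * w) cs) := by
  simp [translateSlice_apply, Fin.update_cons_zero]

theorem translateSlice_eq_zero {i : Fin (n + 1)} (hp : p i = 0) : hf.translateSlice p x y = 0 := by
  ext w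
  rw [translateSlice_apply, LinearMap.zero_apply]
  refine Finset.sum_eq_zero fun l _ => ?_
  rw [hf.apply_eq_zero (i := i) ?_, smul_zero]
  by_cases hi : i = 0
  · subst hi; simp [hp]
  · rw [Function.update_of_ne hi, hp]

theorem translateSlice_rightALin (lh : LeftHopf k A U lb) {v : U}
    (hxy : lh.pinv v - ∑ l, x l ⊗ₜ[k] y l ∈ relOp k A U lb.t) :
    RightALin lb (hf.translateSlice p x y) := by
  intro a w
  let Φ := (hf.slotPairing p).compl₂ (LinearMap.mulRight k (w * p 0))
  have hΦ : ∀ b x y, Φ (x * lb.t b) y = Φ x (lb.t b * y) := fun b x y => by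
    simp [Φ, slotPairing, mul_smul, ← hf.update_zero_t_mul, mul_assoc]
  have h := sum_pinv_t_comm lb lh Φ hΦ hxy a
  simp only [Φ, LinearMap.compl₂_apply, LinearMap.mulRight_apply, slotPairing,
    LinearMap.mk₂_apply] at h
  simp only [translateSlice_apply, smul_eq_mul, Finset.smul_sum, ← mul_smul]
  simpa only [mul_assoc] using h

end IsCochain

section ConsOne

variable {κ : Type} {n : ℕ}

/-- Sweedler components of the entries of `(1, u¹, …, uⁿ)`, all indexed by `Option κ`:
`none` carries `1 ⊗ 1` in slot `0` and `0 ⊗ 0` elsewhere. -/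
def optionCons (c : Fin n → κ → U) : Fin (n + 1) → Option κ → U :=
  Fin.cons (fun o => o.elim 1 fun _ => 0) fun i o => o.elim 0 (c i)

theorem comul_cons_one_sub_mem (lb : LeftBialgebroid k A U) [Fintype κ] {u : Fin n → U}
    {c d : Fin n → κ → U}
    (h : ∀ i, lb.comul (u i) - ∑ j, c i j ⊗ₜ[k] d i j ∈ relA k A U lb.s lb.t U U)
    (i : Fin (n + 1)) :
    lb.comul ((Fin.cons 1 u : Fin (n + 1) → U) i) - ∑ o, optionCons c i o ⊗ₜ[k] optionCons d i o
      ∈ relA k A U lb.s lb.t U U := by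
  cases i using Fin.cases with
  | zero => simpa [optionCons] using lb.comul_one
  | succ i => simpa [optionCons] using h i

theorem sum_optionCons [Fintype κ] {X : Type*} [AddCommMonoid X] (c d : Fin n → κ → U)
    (G : (Fin (n + 1) → U) → (Fin (n + 1) → U) → X) (hG : ∀ p q i, p i = 0 → G p q = 0) :
    ∑ m : Fin (n + 1) → Option κ,
        G (fun i => optionCons c i (m i)) (fun i => optionCons d i (m i)) =
      ∑ m : Fin n → κ, G (Fin.cons 1 fun i => c i (m i)) (Fin.cons 1 fun i => d i (m i)) := by
  refine (Fintype.sum_of_injective (fun m => Fin.cons none (some ∘ m))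
    (fun m m' h => (Option.some_injective κ).comp_left (Fin.cons_right_injective _ h))
    _ _ (fun m hm => ?_) fun m => ?_).symm
  · obtain ⟨i, hi⟩ : ∃ i, optionCons c i (m i) = 0 := by
      cases h0 : m 0 with
      | some j => exact ⟨0, by simp [optionCons, h0]⟩
      | none =>
        by_contra! hne
        refine hm ⟨fun i => (m i.succ).get <| Option.isSome_iff_ne_none.mpr fun h =>
          hne i.succ (by simp [optionCons, h]), ?_⟩
        funext i
        cases i using Fin.cases <;> simp [h0]
    exact hG _ _ i hi
  · congr 1 <;> funext i <;> cases i using Fin.cases <;> rfl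

end ConsOne

theorem stmt_12_general (lb : LeftBialgebroid k A U) (lh : LeftHopf k A U lb)
    (M : Type) [AddCommGroup M] [Module k M] [Module U M] [IsScalarTower k U M]
    (C : AYDContra k A U lb lh M)
    (n : ℕ) (f : (Fin (n + 1) → U) → M) (hf : IsCochain k A U lb M (n + 1) f)
    -- g := θ⁻¹(f), the corresponding U-linear map on the bar resolution:
    (g : (Fin (n + 2) → U) → M) (hg : ∀ z : Fin (n + 2) → U, g z = z 0 • f (Fin.tail z))
    -- F₁ := η⁻¹(g) ∈ Hom_U(U ⊗_A U^{⊗_{Aᵒᵖ}(n+1)}, M):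
    (F₁ : U → (Fin (n + 1) → U) → M)
    (hF₁ : ∀ (v : U) (u : Fin (n + 1) → U) {κ : Type} [Fintype κ] (x y : κ → U),
      lh.pinv v - ∑ j, x j ⊗ₜ[k] y j ∈ relOp k A U lb.t →
      F₁ v u = ∑ j, g (Fin.cons (x j) (Function.update u 0 (y j * u 0))))
    -- F₂ := tr(F₁) ∈ Hom_U(U^{⊗_{Aᵒᵖ}(n+1)} ⊗_A U, M), where tr is the trace
    -- isomorphism \eqref{hunga} of the weak trace functor Hom_U(-, M):
    (F₂ : (Fin (n + 1) → U) → U → M)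
    (hF₂ : ∀ (u : Fin (n + 1) → U) (v : U) (h : U →ₗ[k] M) (hh : RightALin lb h),
      (∀ w : U, h w = F₁ v (Function.update u 0 (w * u 0))) →
      F₂ u v = C.γ h hh)
    -- g₂ := χ(F₂) ∈ Hom_U(U^{⊗_{Aᵒᵖ}(n+2)}, M):
    (g₂ : (Fin (n + 2) → U) → M)
    (hg₂ : ∀ (u : Fin (n + 1) → U) (v : U) {κ : Type} [Fintype κ]
      (c d : Fin (n + 1) → κ → U),
      (∀ i, lb.comul (u i) - ∑ j, c i j ⊗ₜ[k] d i j ∈ relA k A U lb.s lb.t U U) →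
      g₂ (Fin.snoc u v) =
        ∑ m : Fin (n + 1) → κ,
          F₂ (fun i => c i (m i)) ((List.ofFn fun i => d i (m i)).prod * v)) :
    -- conclusion: θ(g₂) = τ(f), the cocyclic operator \eqref{nadennwommama}
    ∀ (u : Fin (n + 1) → U) {κ : Type} [Fintype κ] (c d : Fin n → κ → U),
      (∀ i : Fin n, lb.comul (u i.castSucc) - ∑ j, c i j ⊗ₜ[k] d i j
        ∈ relA k A U lb.s lb.t U U) →
      ∀ {κ' : Type} [Fintype κ'] (e g' : (Fin n → κ) → κ' → U),
      (∀ m : Fin n → κ,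
        lh.pinv ((List.ofFn fun i => d i (m i)).prod * u (Fin.last n)) -
          ∑ l, e m l ⊗ₜ[k] g' m l ∈ relOp k A U lb.t) →
      ∀ (h : U →ₗ[k] M) (hh : RightALin lb h),
      (∀ w : U, h w =
        ∑ m : Fin n → κ, ∑ l,
          e m l • f (Fin.cons (g' m l * w) (fun i => c i (m i)))) →
      g₂ (Fin.cons 1 u) = C.γ h hh := by
  intro u κ _ c d hcomul κ' _ e g' hpinv h hh hhval
  have hF₂_eq : ∀ (p : Fin (n + 1) → U) (v : U) {ι : Type} [Fintype ι] (x y : ι → U)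
      (hxy : lh.pinv v - ∑ l, x l ⊗ₜ[k] y l ∈ relOp k A U lb.t),
      F₂ p v = C.γ (hf.translateSlice p x y) (hf.translateSlice_rightALin p x y lh hxy) := by
    intro p v ι _ x y hxy
    refine hF₂ p v _ _ fun w => ?_
    rw [hF₁ v _ x y hxy, hf.translateSlice_apply]
    refine Finset.sum_congr rfl fun l _ => ?_
    rw [hg, Fin.cons_zero, Fin.tail_cons, Function.update_self, Function.update_idem]
  have hF₂_zero : ∀ p v i, p i = 0 → F₂ p v = 0 := by
    intro p v i hp
    obtain ⟨N, x, y, hxy⟩ := TensorProduct.exists_sum_tmul_eq (lh.pinv v)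
    rw [hF₂_eq p v x y (by rw [hxy, sub_self]; exact zero_mem _)]
    exact C.γ_eq_zero _ (hf.translateSlice_eq_zero p x y hp)
  rw [← Fin.snoc_init_self u, Fin.cons_snoc_eq_snoc_cons,
    hg₂ _ _ _ _ (comul_cons_one_sub_mem lb (u := Fin.init u) hcomul)]
  refine (sum_optionCons c d (fun p q => F₂ p ((List.ofFn q).prod * u (Fin.last n)))
    fun p q i hp => hF₂_zero p _ i hp).trans ?_
  simp only [List.ofFn_cons, List.prod_cons, one_mul]
  refine (Finset.sum_congr rfl fun m _ => hF₂_eq _ _ _ _ (hpinv m)).trans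
    (C.γ_eq_sum hh _ _ ?_).symm
  ext w
  simp [hhval, hf.translateSlice_cons_one_apply]

/-- let `(U, A)` be a left bialgebroid which is left Hopf and `M`
a stable anti Yetter-Drinfel'd contramodule over `U` with contraaction `γ`.
For each `q = n+1`, consider the isomorphisms
`θ : Hom_U(U^{⊗_{Aᵒᵖ}(q+1)}, M) ≅ Hom_{Aᵒᵖ}(U^{⊗_{Aᵒᵖ} q}, M)`, `g ↦ g(1, ·)`
(with inverse `f ↦ (z ↦ z₀ • f(tail z))`),
`η : Hom_U(U ⊗_A U^{⊗_{Aᵒᵖ} q}, M) ≅ Hom_U(U^{⊗_{Aᵒᵖ}(q+1)}, M)`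
(with inverse `η⁻¹(g)(v ⊗ (u¹,…)) = g(v₊, v₋u¹, u²,…)`), and
`χ : Hom_U(U^{⊗_{Aᵒᵖ} q} ⊗_A U, M) ≅ Hom_U(U^{⊗_{Aᵒᵖ}(q+1)}, M)`,
`χ(f)(u¹,…,u^q,v) = f((u¹₍₁₎,…,u^q₍₁₎) ⊗ u¹₍₂₎⋯u^q₍₂₎v)`.
Then the composite `θ ∘ χ ∘ tr ∘ η⁻¹ ∘ θ⁻¹`, with
`tr : Hom_U(U ⊗_A U^{⊗_{Aᵒᵖ} q}, M) ≅ Hom_U(U^{⊗_{Aᵒᵖ} q} ⊗_A U, M)` the trace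
isomorphism `(tr f)(p ⊗ n) = γ(f(n ⊗ − p))`, equals the cocyclic operator
`(τ f)(u¹, …, u^q) = γ(((u¹₍₂₎ ⋯ u^{q-1}₍₂₎ u^q) · f)(−, u¹₍₁₎, …, u^{q-1}₍₁₎))`
on `C^q(U,M)`. -/
theorem stmt_12 (lb : LeftBialgebroid k A U) (lh : LeftHopf k A U lb)
    (M : Type) [AddCommGroup M] [Module k M] [Module U M] [IsScalarTower k U M]
    (C : AYDContra k A U lb lh M) (hstable : C.Stable)
    (n : ℕ) (f : (Fin (n + 1) → U) → M) (hf : IsCochain k A U lb M (n + 1) f)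
    -- g := θ⁻¹(f), the corresponding U-linear map on the bar resolution:
    (g : (Fin (n + 2) → U) → M) (hg : ∀ z : Fin (n + 2) → U, g z = z 0 • f (Fin.tail z))
    -- F₁ := η⁻¹(g) ∈ Hom_U(U ⊗_A U^{⊗_{Aᵒᵖ}(n+1)}, M):
    (F₁ : U → (Fin (n + 1) → U) → M)
    (hF₁ : ∀ (v : U) (u : Fin (n + 1) → U) {κ : Type} [Fintype κ] (x y : κ → U),
      lh.pinv v - ∑ j, x j ⊗ₜ[k] y j ∈ relOp k A U lb.t →
      F₁ v u = ∑ j, g (Fin.cons (x j) (Function.update u 0 (y j * u 0))))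
    -- F₂ := tr(F₁) ∈ Hom_U(U^{⊗_{Aᵒᵖ}(n+1)} ⊗_A U, M), where tr is the trace
    -- isomorphism \eqref{hunga} of the weak trace functor Hom_U(-, M):
    (F₂ : (Fin (n + 1) → U) → U → M)
    (hF₂ : ∀ (u : Fin (n + 1) → U) (v : U) (h : U →ₗ[k] M) (hh : RightALin lb h),
      (∀ w : U, h w = F₁ v (Function.update u 0 (w * u 0))) →
      F₂ u v = C.γ h hh)
    -- g₂ := χ(F₂) ∈ Hom_U(U^{⊗_{Aᵒᵖ}(n+2)}, M):
    (g₂ : (Fin (n + 2) → U) → M)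
    (hg₂ : ∀ (u : Fin (n + 1) → U) (v : U) {κ : Type} [Fintype κ]
      (c d : Fin (n + 1) → κ → U),
      (∀ i, lb.comul (u i) - ∑ j, c i j ⊗ₜ[k] d i j ∈ relA k A U lb.s lb.t U U) →
      g₂ (Fin.snoc u v) =
        ∑ m : Fin (n + 1) → κ,
          F₂ (fun i => c i (m i)) ((List.ofFn fun i => d i (m i)).prod * v)) :
    -- conclusion: θ(g₂) = τ(f), the cocyclic operator \eqref{nadennwommama}
    ∀ (u : Fin (n + 1) → U) {κ : Type} [Fintype κ] (c d : Fin n → κ → U),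
      (∀ i : Fin n, lb.comul (u i.castSucc) - ∑ j, c i j ⊗ₜ[k] d i j
        ∈ relA k A U lb.s lb.t U U) →
      ∀ {κ' : Type} [Fintype κ'] (e g' : (Fin n → κ) → κ' → U),
      (∀ m : Fin n → κ,
        lh.pinv ((List.ofFn fun i => d i (m i)).prod * u (Fin.last n)) -
          ∑ l, e m l ⊗ₜ[k] g' m l ∈ relOp k A U lb.t) →
      ∀ (h : U →ₗ[k] M) (hh : RightALin lb h),
      (∀ w : U, h w =
        ∑ m : Fin n → κ, ∑ l,
          e m l • f (Fin.cons (g' m l * w) (fun i => c i (m i)))) →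
      g₂ (Fin.cons 1 u) = C.γ h hh :=
  stmt_12_general lb lh M C n f hf g hg F₁ hF₁ F₂ hF₂ g₂ hg₂

end
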